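/- arXiv:1206.0803 — 5 statements merged into one kernel-verified Lean document; each statement's English description precedes it below -/
import Mathlib

section
/- The Catalan numbers satisfy C_n = sum over j with 0 ≤ 2j ≤ n-1 of C_j * binomial(n-1, 2j) * 2^(n-1-2j), for all n ≥ 1. -/
/-!
Divide the `k`-th summand by `2 ^ m` and view `C_{m+1} = ∑ₖ C_k (m choose 2k) 2^(m-2k)` as
`C_{m+1} / 2 ^ m = ∑ₖ C_k (m choose 2k) / 4 ^ k`. Both sides satisfy the first-order recurrence
`(m + 3) x_{m+1} = (2m + 3) x_m` and agree at `m = 0`. For the sum this is a Wilf–Zeilberger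
argument: the summands satisfy the recurrence up to a telescoping difference of the certificate
`2 (k + 1) C_k (m choose 2k-1) / 4 ^ k`.
-/

open Finset

theorem succ_succ_mul_catalan_succ (n : ℕ) :
    (n + 2) * catalan (n + 1) = 2 * (2 * n + 1) * catalan n := by
  refine Nat.eq_of_mul_eq_mul_left n.succ_pos ?_
  calc (n + 1) * ((n + 2) * catalan (n + 1))
      = (n + 1) * (n + 1).centralBinom := by rw [← succ_mul_catalan_eq_centralBinom]
    _ = 2 * (2 * n + 1) * n.centralBinom := Nat.succ_mul_centralBinom_succ n
    _ = (n + 1) * (2 * (2 * n + 1) * catalan n) := by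
      rw [← succ_mul_catalan_eq_centralBinom]; ring

theorem cast_add_three_mul_catalan_add_two (n : ℕ) :
    ((n : ℚ) + 3) * catalan (n + 2) = 2 * (2 * n + 3) * catalan (n + 1) := by
  have := congrArg (Nat.cast (R := ℚ)) (succ_succ_mul_catalan_succ (n + 1))
  push_cast at this
  linear_combination this

theorem Nat.cast_choose_succ_mul {R : Type*} [CommRing R] (m i : ℕ) :
    (m.choose (i + 1) : R) * (i + 1) = m.choose i * (m - i) := by
  rcases le_or_gt i m with h | h
  · have := congrArg (Nat.cast : ℕ → R) (Nat.choose_succ_right_eq m i)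
    push_cast [h] at this
    exact this
  · rw [Nat.choose_eq_zero_of_lt h, Nat.choose_eq_zero_of_lt (by omega)]
    simp

def touchardTerm (m k : ℕ) : ℚ :=
  catalan k * m.choose (2 * k) / 4 ^ k

def touchardCert (m : ℕ) : ℕ → ℚ
  | 0 => 0
  | k + 1 => 2 * (k + 2) * catalan (k + 1) * m.choose (2 * k + 1) / 4 ^ (k + 1)

def touchardSum (m : ℕ) : ℚ :=
  ∑ k ∈ range (m + 1), touchardTerm m k

theorem touchardTerm_eq_zero {m k : ℕ} (h : m < 2 * k) : touchardTerm m k = 0 := by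
  simp [touchardTerm, Nat.choose_eq_zero_of_lt h]

theorem touchardTerm_wz (m k : ℕ) :
    (m + 3) * touchardTerm (m + 1) k - (2 * m + 3) * touchardTerm m k
      = touchardCert m k - touchardCert m (k + 1) := by
  cases k with
  | zero => simp [touchardTerm, touchardCert]; ring
  | succ j =>
    have hC := cast_add_three_mul_catalan_add_two j
    have hPascal :
        ((m + 1).choose (2 * j + 2) : ℚ) = m.choose (2 * j + 1) + m.choose (2 * j + 2) := by
      exact_mod_cast Nat.choose_succ_succ m (2 * j + 1)
    have h₂ :
        (m.choose (2 * j + 2) : ℚ) * (2 * j + 2) = m.choose (2 * j + 1) * (m - (2 * j + 1)) := by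
      have := Nat.cast_choose_succ_mul (R := ℚ) m (2 * j + 1)
      push_cast at this
      linear_combination this
    have h₃ :
        (m.choose (2 * j + 3) : ℚ) * (2 * j + 3) = m.choose (2 * j + 2) * (m - (2 * j + 2)) := by
      have := Nat.cast_choose_succ_mul (R := ℚ) m (2 * j + 2)
      push_cast at this
      linear_combination this
    simp only [touchardTerm, touchardCert, show 2 * (j + 1) = 2 * j + 2 by ring,
      show j + 1 + 1 = j + 2 by ring, hPascal]
    push_cast
    linear_combination (2 * (m.choose (2 * j + 3) : ℚ) * hC
      + 4 * (catalan (j + 1) : ℚ) * (h₃ - h₂)) / 4 ^ (j + 2)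

theorem touchardSum_succ (m : ℕ) :
    (m + 3) * touchardSum (m + 1) = (2 * m + 3) * touchardSum m := by
  have hSum : touchardSum m = ∑ k ∈ range (m + 2), touchardTerm m k := by
    rw [sum_range_succ, touchardTerm_eq_zero (by omega), add_zero, touchardSum]
  have hTop : touchardCert m (m + 2) = 0 := by
    simp [touchardCert, Nat.choose_eq_zero_of_lt (show m < 2 * (m + 1) + 1 by omega)]
  rw [← sub_eq_zero, hSum, touchardSum, mul_sum, mul_sum, ← sum_sub_distrib,
    sum_congr rfl fun k _ => touchardTerm_wz m k, sum_range_sub', touchardCert, hTop, sub_zero]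

theorem touchardSum_eq (m : ℕ) : touchardSum m = catalan (m + 1) / 2 ^ m := by
  induction m with
  | zero => simp [touchardSum, touchardTerm]
  | succ m ih =>
    have hC := cast_add_three_mul_catalan_add_two m
    refine mul_left_cancel₀ (by positivity : (m + 3 : ℚ) ≠ 0) ?_
    rw [touchardSum_succ m, ih]
    field_simp
    linear_combination (-(2 : ℚ) ^ m) * hC

theorem two_pow_mul_touchardTerm {m k : ℕ} (hk : 2 * k ≤ m) :
    2 ^ m * touchardTerm m k = ((catalan k * m.choose (2 * k) * 2 ^ (m - 2 * k) : ℕ) : ℚ) := by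
  have hPow : (2 : ℚ) ^ m = 4 ^ k * 2 ^ (m - 2 * k) := by
    rw [show (4 : ℚ) = 2 ^ 2 by norm_num, ← pow_mul, ← pow_add, Nat.add_sub_cancel' hk]
  rw [touchardTerm, hPow]
  push_cast
  field_simp

/-- For `n ≥ 1`, the Catalan numbers satisfy
`C_n = ∑_{0 ≤ 2j ≤ n-1} C_j * binomial(n-1, 2j) * 2^(n-1-2j)`. -/
theorem catalan_gamma_sum (n : ℕ) (hn : 1 ≤ n) :
    catalan n = ∑ j ∈ (Finset.range n).filter (fun j => 2 * j ≤ n - 1),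
      catalan j * (n - 1).choose (2 * j) * 2 ^ (n - 1 - 2 * j) := by
  obtain ⟨m, rfl⟩ : ∃ m, n = m + 1 := ⟨n - 1, by omega⟩
  rw [Nat.add_sub_cancel]
  have hSum : ((∑ j ∈ (range (m + 1)).filter (fun j => 2 * j ≤ m),
      catalan j * m.choose (2 * j) * 2 ^ (m - 2 * j) : ℕ) : ℚ) = 2 ^ m * touchardSum m := by
    rw [Nat.cast_sum, ← sum_congr rfl fun k hk => two_pow_mul_touchardTerm (mem_filter.mp hk).2,
      sum_filter_of_ne fun k _ hk => ?_, touchardSum, mul_sum]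
    by_contra hkm
    exact hk (by rw [touchardTerm_eq_zero (by omega), mul_zero])
  rw [touchardSum_eq, mul_div_cancel₀ _ (by positivity)] at hSum
  exact_mod_cast hSum.symm
end

section
/- The area generating polynomial for Dyck paths, D_n(q) = sum over Dyck paths p of order n of q^(area(p)), satisfies the Carlitz–Riordan recurrence D_n(q) = sum_{k=0}^{n-1} q^k * D_k(q) * D_{n-1-k}(q) for n ≥ 1, with D_0(q) = 1. -/
open Finset

/-- Number of up steps (`true`) among the first `k` steps of `p`. -/
def upCount {m : ℕ} (p : Fin m → Bool) (k : ℕ) : ℕ :=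
  (Finset.univ.filter fun i : Fin m => (i : ℕ) < k ∧ p i = true).card

/-- Number of down steps (`false`) among the first `k` steps of `p`. -/
def downCount {m : ℕ} (p : Fin m → Bool) (k : ℕ) : ℕ :=
  (Finset.univ.filter fun i : Fin m => (i : ℕ) < k ∧ p i = false).card

/-- `p` is a Dyck path of order `n`: a path of `2n` steps (up = `true`,
down = `false`), with `n` up steps, never going below the x-axis. -/
def IsDyck (n : ℕ) (p : Fin (2 * n) → Bool) : Prop :=
  upCount p (2 * n) = n ∧ ∀ k < 2 * n + 1, downCount p k ≤ upCount p k

instance (n : ℕ) : DecidablePred (IsDyck n) := fun p => by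
  unfold IsDyck; infer_instance

/-- The Finset of Dyck paths of order `n`. -/
def dyckSet (n : ℕ) : Finset (Fin (2 * n) → Bool) :=
  Finset.univ.filter (IsDyck n)

/-- Height of the path after `k` steps. -/
def height {n : ℕ} (p : Fin (2 * n) → Bool) (k : ℕ) : ℕ :=
  upCount p k - downCount p k

/-- The area of a Dyck path: the number of unused lattice points strictly below
the path and weakly above the x-axis (equivalently, the number of
`1/√2 × 1/√2` diamonds fitting between the path and the x-axis). -/
def area {n : ℕ} (p : Fin (2 * n) → Bool) : ℕ :=
  ∑ k ∈ Finset.range (2 * n + 1), height p k / 2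

/-- The `j`-th step of `p` (defaulting to `false` out of range). -/
def stepAt {m : ℕ} (p : Fin m → Bool) (j : ℕ) : Bool :=
  if h : j < m then p ⟨j, h⟩ else false

/-- The rank of a Dyck path of order `n` in the noncrossing partition lattice
under Stump's bijection: equivalently (Simion–Ullman) the number of letters `b`
and `r` in its SU-word, i.e. the number of `i ∈ {1,…,n-1}` for which the step
leaving the `i`-th odd lattice point (the step with index `2i-1`, 0-indexed)
is an up step. -/
def rk {n : ℕ} (p : Fin (2 * n) → Bool) : ℕ :=
  ((Finset.Icc 1 (n - 1)).filter fun i => stepAt p (2 * i - 1) = true).card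

/-!
Reading `true` as `U` and `false` as `D` identifies Dyck paths of order `n` with Mathlib's
`DyckWord`s of semilength `n`, preserving the area. A nonempty Dyck word factors uniquely at
its first return as `nest p + q` (that is, `U p D q`), with `p` and `q` Dyck words of total
semilength `n - 1`. Areas add under concatenation, and nesting a word `p` of semilength `k`
raises each of its `2k + 1` heights `h` by one, which adds `⌊(h + 1)/2⌋ - ⌊h/2⌋ = h mod 2`.
Since `h` has the parity of its position, this adds `k` in total, so
`area (nest p + q) = k + area p + area q`.
-/

open DyckStep

theorem List.count_U_add_count_D (l : List DyckStep) : l.count U + l.count D = l.length := by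
  induction l with
  | nil => rfl
  | cons s l ih => cases s <;> simp <;> omega

theorem Finset.sum_range_two_mul_add_one_mod_two (m : ℕ) :
    ∑ k ∈ range (2 * m + 1), k % 2 = m := by
  induction m with
  | zero => simp
  | succ m ih =>
    rw [show 2 * (m + 1) + 1 = 2 * m + 1 + 1 + 1 by ring, sum_range_succ, sum_range_succ, ih]
    omega

namespace DyckWord

variable {p q : DyckWord} {k : ℕ}

def heightAt (p : DyckWord) (k : ℕ) : ℕ :=
  (p.toList.take k).count U - (p.toList.take k).count D

def area (p : DyckWord) : ℕ :=
  ∑ k ∈ range (p.toList.length + 1), p.heightAt k / 2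

lemma toList_add (p q : DyckWord) : (p + q).toList = p.toList ++ q.toList := rfl

lemma toList_nest (p : DyckWord) : p.nest.toList = U :: (p.toList ++ [D]) := rfl

@[simp] lemma heightAt_zero : p.heightAt 0 = 0 := by simp [heightAt]

@[simp] lemma heightAt_length : p.heightAt p.toList.length = 0 := by
  simp [heightAt, count_U_eq_count_D]

@[simp] lemma area_zero : area 0 = 0 := rfl

lemma heightAt_add_of_le (hk : k ≤ p.toList.length) : (p + q).heightAt k = p.heightAt k := by
  simp [heightAt, toList_add, List.take_append_of_le_length hk]

lemma heightAt_add_length_add (j : ℕ) :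
    (p + q).heightAt (p.toList.length + j) = q.heightAt j := by
  simp [heightAt, toList_add, List.take_length_add_append, count_U_eq_count_D,
    Nat.add_sub_add_left]

lemma area_add : (p + q).area = p.area + q.area := by
  rw [area, toList_add, List.length_append, add_right_comm, sum_range_add, area, area,
    sum_range_succ' (fun k => q.heightAt k / 2)]
  congr 1
  · exact sum_congr rfl fun k hk => by
      rw [heightAt_add_of_le (Nat.lt_succ_iff.mp (mem_range.mp hk))]
  · simp [add_right_comm _ 1, heightAt_add_length_add, add_assoc]

lemma heightAt_nest_succ (hk : k ≤ p.toList.length) :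
    p.nest.heightAt (k + 1) = p.heightAt k + 1 := by
  have := p.count_D_le_count_U k
  simp [heightAt, toList_nest, List.take_append_of_le_length hk]
  omega

lemma heightAt_nest_succ_div_two (hk : k ≤ p.toList.length) :
    p.nest.heightAt (k + 1) / 2 = p.heightAt k / 2 + k % 2 := by
  have hsum := (p.toList.take k).count_U_add_count_D
  have hle := p.count_D_le_count_U k
  rw [List.length_take_of_le hk] at hsum
  rw [heightAt_nest_succ hk, heightAt]
  omega

lemma area_nest : p.nest.area = p.area + p.semilength := by
  have hlen : p.nest.toList.length = p.toList.length + 1 + 1 := by simp [toList_nest]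
  have hlast : p.nest.heightAt (p.toList.length + 1 + 1) = 0 := hlen ▸ heightAt_length
  have hmid : ∀ k ∈ range (p.toList.length + 1),
      p.nest.heightAt (k + 1) / 2 = p.heightAt k / 2 + k % 2 :=
    fun k hk => heightAt_nest_succ_div_two (Nat.lt_succ_iff.mp (mem_range.mp hk))
  rw [area, hlen, sum_range_succ, hlast, sum_range_succ', heightAt_zero, sum_congr rfl hmid,
    sum_add_distrib, area, ← two_mul_semilength_eq_length, sum_range_two_mul_add_one_mod_two]
  simp

def withSemilength (n : ℕ) : Finset DyckWord :=
  univ.map (Function.Embedding.subtype fun p : DyckWord => p.semilength = n)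

@[simp] lemma mem_withSemilength {n : ℕ} : p ∈ withSemilength n ↔ p.semilength = n := by
  simp [withSemilength]

lemma withSemilength_zero : withSemilength 0 = {0} := by
  ext p
  rw [mem_withSemilength, mem_singleton, ← toList_eq_nil, ← List.length_eq_zero_iff,
    ← two_mul_semilength_eq_length]
  omega

lemma ne_zero_of_mem_withSemilength_succ {n : ℕ} (hp : p ∈ withSemilength (n + 1)) :
    p ≠ 0 := by
  rintro rfl
  simp at hp

theorem sum_withSemilength_succ {M : Type*} [AddCommMonoid M] (f : DyckWord → M) (n : ℕ) :
    ∑ p ∈ withSemilength (n + 1), f p =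
      ∑ ij ∈ antidiagonal n, ∑ p ∈ withSemilength ij.1, ∑ q ∈ withSemilength ij.2,
        f (p.nest + q) := by
  simp_rw [← sum_product', sum_sigma']
  refine sum_nbij' (fun p => ⟨(p.insidePart.semilength, p.outsidePart.semilength),
      (p.insidePart, p.outsidePart)⟩) (fun x => x.2.1.nest + x.2.2) ?_ ?_ ?_ ?_ ?_
  · intro p hp
    have := semilength_insidePart_add_semilength_outsidePart_add_one
      (ne_zero_of_mem_withSemilength_succ hp)
    simp only [mem_withSemilength, mem_sigma, HasAntidiagonal.mem_antidiagonal, mem_product,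
      and_self, and_true] at hp ⊢
    omega
  · rintro ⟨⟨i, j⟩, a, b⟩ hx
    simp only [mem_sigma, HasAntidiagonal.mem_antidiagonal, mem_product, mem_withSemilength,
      semilength_add, semilength_nest] at hx ⊢
    omega
  · intro p hp
    exact nest_insidePart_add_outsidePart (ne_zero_of_mem_withSemilength_succ hp)
  · rintro ⟨⟨i, j⟩, a, b⟩ hx
    obtain ⟨-, rfl, rfl⟩ : i + j = n ∧ a.semilength = i ∧ b.semilength = j := by
      simpa using hx
    simp
  · intro p hp
    rw [nest_insidePart_add_outsidePart (ne_zero_of_mem_withSemilength_succ hp)]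

theorem sum_pow_area_withSemilength_succ {R : Type*} [CommSemiring R] (x : R) (n : ℕ) :
    ∑ p ∈ withSemilength (n + 1), x ^ p.area =
      ∑ ij ∈ antidiagonal n, x ^ ij.1 * (∑ p ∈ withSemilength ij.1, x ^ p.area) *
        ∑ q ∈ withSemilength ij.2, x ^ q.area := by
  rw [sum_withSemilength_succ]
  refine sum_congr rfl fun ij _ => ?_
  simp_rw [mul_assoc, sum_mul_sum, mul_sum]
  refine sum_congr rfl fun p hp => sum_congr rfl fun q _ => ?_
  rw [area_add, area_nest, mem_withSemilength.mp hp]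
  ring

end DyckWord

theorem List.count_take_ofFn {α : Type*} [DecidableEq α] {m : ℕ} (f : Fin m → α) (a : α)
    (k : ℕ) : ((List.ofFn f).take k).count a = #{i : Fin m | (i : ℕ) < k ∧ f i = a} := by
  induction m generalizing k with
  | zero => simp
  | succ m ih =>
    cases k with
    | zero => simp
    | succ k =>
      rw [List.ofFn_succ, List.take_succ_cons, List.count_cons, ih, Fin.card_filter_univ_succ']
      simp [add_comm]

def DyckStep.ofBool (b : Bool) : DyckStep := bif b then U else D

@[simp] lemma DyckStep.ofBool_eq_U {b : Bool} : ofBool b = U ↔ b = true := by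
  cases b <;> simp [ofBool]

@[simp] lemma DyckStep.ofBool_eq_D {b : Bool} : ofBool b = D ↔ b = false := by
  cases b <;> simp [ofBool]

def stepList {m : ℕ} (p : Fin m → Bool) : List DyckStep := List.ofFn (DyckStep.ofBool ∘ p)

@[simp] lemma length_stepList {m : ℕ} (p : Fin m → Bool) : (stepList p).length = m :=
  List.length_ofFn

lemma upCount_eq_count_take {m : ℕ} (p : Fin m → Bool) (k : ℕ) :
    upCount p k = ((stepList p).take k).count U := by
  simp [upCount, stepList, List.count_take_ofFn]

lemma downCount_eq_count_take {m : ℕ} (p : Fin m → Bool) (k : ℕ) :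
    downCount p k = ((stepList p).take k).count D := by
  simp [downCount, stepList, List.count_take_ofFn]

@[simp] lemma mem_dyckSet {n : ℕ} {p : Fin (2 * n) → Bool} :
    p ∈ dyckSet n ↔ IsDyck n p := by
  simp [dyckSet]

lemma isDyck_iff {n : ℕ} {p : Fin (2 * n) → Bool} :
    IsDyck n p ↔ (stepList p).count U = n ∧
      ∀ k, ((stepList p).take k).count D ≤ ((stepList p).take k).count U := by
  simp only [IsDyck, upCount_eq_count_take, downCount_eq_count_take]
  rw [List.take_of_length_le (length_stepList p).le]
  refine and_congr_right fun _ => ⟨fun h k => ?_, fun h k _ => h k⟩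
  rw [List.take_eq_take_min, length_stepList]
  exact h _ (by omega)

def IsDyck.toDyckWord {n : ℕ} {p : Fin (2 * n) → Bool} (hp : IsDyck n p) : DyckWord where
  toList := stepList p
  count_U_eq_count_D := by
    have hU := (isDyck_iff.mp hp).1
    have hUD := (stepList p).count_U_add_count_D
    rw [length_stepList] at hUD
    omega
  count_D_le_count_U := (isDyck_iff.mp hp).2

lemma IsDyck.semilength_toDyckWord {n : ℕ} {p : Fin (2 * n) → Bool} (hp : IsDyck n p) :
    hp.toDyckWord.semilength = n :=
  (isDyck_iff.mp hp).1

def DyckWord.toBoolFun (n : ℕ) (w : DyckWord) (i : Fin (2 * n)) : Bool := w.toList.getD i D == U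

lemma stepList_toBoolFun {n : ℕ} {w : DyckWord} (hw : w.semilength = n) :
    stepList (w.toBoolFun n) = w.toList := by
  have hlen : w.toList.length = 2 * n := by rw [← hw, DyckWord.two_mul_semilength_eq_length]
  apply List.ext_getElem (by simp [hlen])
  intro i _ hi
  simp only [stepList, DyckWord.toBoolFun, List.getElem_ofFn, Function.comp_apply]
  rw [List.getD_eq_getElem _ _ hi]
  cases w.toList[i] <;> rfl

lemma IsDyck.toBoolFun_toDyckWord {n : ℕ} {p : Fin (2 * n) → Bool} (hp : IsDyck n p) :
    hp.toDyckWord.toBoolFun n = p := by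
  funext i
  simp only [DyckWord.toBoolFun, IsDyck.toDyckWord, stepList]
  rw [List.getD_eq_getElem _ _ (by simp), List.getElem_ofFn, Function.comp_apply, Fin.eta]
  cases p i <;> rfl

lemma isDyck_toBoolFun {n : ℕ} {w : DyckWord} (hw : w.semilength = n) :
    IsDyck n (w.toBoolFun n) := by
  rw [isDyck_iff, stepList_toBoolFun hw]
  exact ⟨hw, w.count_D_le_count_U⟩

lemma IsDyck.area_toDyckWord {n : ℕ} {p : Fin (2 * n) → Bool} (hp : IsDyck n p) :
    hp.toDyckWord.area = area p := by
  simp [area, DyckWord.area, height, DyckWord.heightAt, IsDyck.toDyckWord,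
    upCount_eq_count_take, downCount_eq_count_take]

theorem sum_dyckSet_eq_sum_withSemilength {M : Type*} [AddCommMonoid M] (f : ℕ → M) (n : ℕ) :
    ∑ p ∈ dyckSet n, f (area p) = ∑ w ∈ DyckWord.withSemilength n, f w.area := by
  refine sum_bij' (fun p hp => (mem_dyckSet.mp hp).toDyckWord) (fun w _ => w.toBoolFun n)
    ?_ ?_ ?_ ?_ ?_
  · intro p hp
    exact DyckWord.mem_withSemilength.mpr (mem_dyckSet.mp hp).semilength_toDyckWord
  · intro w hw
    exact mem_dyckSet.mpr (isDyck_toBoolFun (DyckWord.mem_withSemilength.mp hw))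
  · intro p hp
    exact (mem_dyckSet.mp hp).toBoolFun_toDyckWord
  · intro w hw
    exact DyckWord.ext (stepList_toBoolFun (DyckWord.mem_withSemilength.mp hw))
  · intro p hp
    rw [IsDyck.area_toDyckWord]

/-- Carlitz–Riordan recurrence for the area generating polynomial of Dyck
paths: `D_0(q) = 1` and, for `n ≥ 1`,
`D_n(q) = ∑_{k=0}^{n-1} q^k D_k(q) D_{n-1-k}(q)`. -/
theorem carlitz_riordan (n : ℕ) (hn : 1 ≤ n) (q : ℝ) :
    (∑ p ∈ dyckSet 0, q ^ area p) = 1 ∧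
    (∑ p ∈ dyckSet n, q ^ area p) =
      ∑ k ∈ Finset.range n, q ^ k * (∑ p ∈ dyckSet k, q ^ area p) *
        (∑ p ∈ dyckSet (n - 1 - k), q ^ area p) := by
  obtain ⟨m, rfl⟩ := Nat.exists_eq_add_of_le' hn
  simp only [sum_dyckSet_eq_sum_withSemilength (q ^ ·)]
  refine ⟨by simp [DyckWord.withSemilength_zero], ?_⟩
  rw [DyckWord.sum_pow_area_withSemilength_succ, Nat.sum_antidiagonal_eq_sum_range_succ_mk]
  simp
end

section
/- For each Dyck path p of order n decomposed at its first return as p = p1^+ p2 with p1 of order k, the rank satisfies rk(p1^+) = k - rk(p1), and hence rk(p) = k - rk(p1) + rk(p2). -/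
/-!
In Simion–Ullman form, `rk p` counts the up steps of `p` at the odd positions `1, 3, …, 2n - 3`;
since a Dyck path ends with a down step, position `2n - 1` may be counted as well. Prepending an
up step turns the odd steps of `p1⁺` into the even steps of `p1`, and `p1` has `k` up steps in
all, so `rk p1⁺ = k - rk p1`. In `p = p1⁺ p2` the odd positions split into those of `p1⁺` and,
shifted by the two steps of the return, those of `p2`.
-/

open Finset

lemma stepAt_of_lt {m : ℕ} (p : Fin m → Bool) {i : ℕ} (hi : i < m) :
    stepAt p i = p ⟨i, hi⟩ :=
  dif_pos hi

lemma upCount_eq_sum {m : ℕ} (p : Fin m → Bool) (k : ℕ) :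
    upCount p k = ∑ i ∈ range k, if stepAt p i then 1 else 0 := by
  rw [← card_filter, upCount, ← card_map Fin.valEmbedding]
  congr 1
  ext i
  by_cases hi : i < m
  · simp [stepAt_of_lt p hi, Fin.exists_iff, hi]
  · simp [stepAt, hi, Fin.exists_iff]

lemma downCount_eq_sum {m : ℕ} (p : Fin m → Bool) {k : ℕ} (hk : k ≤ m) :
    downCount p k = ∑ i ∈ range k, if stepAt p i = false then 1 else 0 := by
  rw [← card_filter, downCount, ← card_map Fin.valEmbedding]
  congr 1
  ext i
  by_cases hi : i < m
  · simp [stepAt_of_lt p hi, Fin.exists_iff, hi]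
  · simp
    omega

lemma upCount_add_downCount {m : ℕ} (p : Fin m → Bool) {k : ℕ} (hk : k ≤ m) :
    upCount p k + downCount p k = k := by
  rw [upCount_eq_sum, downCount_eq_sum p hk, ← sum_add_distrib]
  calc ∑ i ∈ range k, ((if stepAt p i then 1 else 0) + if stepAt p i = false then 1 else 0)
      = ∑ _i ∈ range k, 1 := sum_congr rfl fun i _ => by cases stepAt p i <;> rfl
    _ = k := by simp

lemma sum_range_two_mul (f : ℕ → ℕ) (k : ℕ) :
    ∑ i ∈ range (2 * k), f i = ∑ j ∈ range k, (f (2 * j) + f (2 * j + 1)) := by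
  induction k with
  | zero => rfl
  | succ k ih => rw [mul_add_one, sum_range_succ, sum_range_succ, sum_range_succ, ih, add_assoc]

lemma rk_eq_sum_range_sub_one {n : ℕ} (p : Fin (2 * n) → Bool) :
    rk p = ∑ j ∈ range (n - 1), if stepAt p (2 * j + 1) then 1 else 0 := by
  rw [rk, card_filter, ← Finset.Ico_add_one_right_eq_Icc, sum_Ico_eq_sum_range]
  refine sum_congr (by rw [Nat.add_sub_cancel]) fun j _ => ?_
  rw [show 2 * (1 + j) - 1 = 2 * j + 1 by omega]

lemma rk_eq_sum_even_of_stepAt_succ {k : ℕ} (q : Fin (2 * (k + 1)) → Bool)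
    (p : Fin (2 * k) → Bool) (h : ∀ i < 2 * k, stepAt q (i + 1) = stepAt p i) :
    rk q = ∑ j ∈ range k, if stepAt p (2 * j) then 1 else 0 :=
  (rk_eq_sum_range_sub_one q).trans <|
    sum_congr rfl fun j hj => by rw [h (2 * j) (by simp at hj; omega)]

namespace IsDyck

variable {n : ℕ} {p : Fin (2 * n) → Bool}

lemma stepAt_two_mul_sub_one (hp : IsDyck n p) (hn : 0 < n) : stepAt p (2 * n - 1) = false := by
  have hsucc :
      upCount p (2 * n) = upCount p (2 * n - 1) + if stepAt p (2 * n - 1) then 1 else 0 := by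
    rw [upCount_eq_sum, upCount_eq_sum, ← sum_range_succ, Nat.sub_add_cancel (by omega)]
  have htotal := upCount_add_downCount p (k := 2 * n - 1) (by omega)
  have hbelow := hp.2 (2 * n - 1) (by omega)
  -- a final up step would leave `n - 1` ups but `n` downs among the first `2n - 1` steps
  cases hlast : stepAt p (2 * n - 1)
  · rfl
  · simp only [hlast, if_true, hp.1] at hsucc
    omega

lemma rk_eq_sum_range (hp : IsDyck n p) :
    rk p = ∑ j ∈ range n, if stepAt p (2 * j + 1) then 1 else 0 := by
  rw [rk_eq_sum_range_sub_one]
  rcases n with _ | n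
  · rfl
  · rw [sum_range_succ, show 2 * n + 1 = 2 * (n + 1) - 1 by omega,
      hp.stepAt_two_mul_sub_one n.succ_pos]
    rfl

lemma sum_even_add_rk (hp : IsDyck n p) :
    (∑ j ∈ range n, if stepAt p (2 * j) then 1 else 0) + rk p = n := by
  rw [hp.rk_eq_sum_range, ← sum_add_distrib,
    ← sum_range_two_mul fun i => if stepAt p i then 1 else 0, ← upCount_eq_sum, hp.1]

end IsDyck

theorem rank_first_return_general (n k : ℕ) (hn : 1 ≤ n) (hk : k ≤ n - 1)
    (p : Fin (2 * n) → Bool) (p1 : Fin (2 * k) → Bool)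
    (p1plus : Fin (2 * (k + 1)) → Bool)
    (p2 : Fin (2 * (n - 1 - k)) → Bool)
    (hp : IsDyck n p) (hp1 : IsDyck k p1)
    (hp2 : IsDyck (n - 1 - k) p2)
    (h1 : ∀ i < 2 * k, stepAt p (i + 1) = stepAt p1 i)
    (h2 : stepAt p (2 * k + 1) = false)
    (h3 : ∀ i < 2 * (n - 1 - k), stepAt p (2 * k + 2 + i) = stepAt p2 i)
    (g1 : ∀ i < 2 * k, stepAt p1plus (i + 1) = stepAt p1 i) :
    rk p1plus = k - rk p1 ∧ rk p = k - rk p1 + rk p2 := by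
  have hp1_even := hp1.sum_even_add_rk
  have hrk_plus := rk_eq_sum_even_of_stepAt_succ p1plus p1 g1
  have hrk : rk p = (∑ j ∈ range k, if stepAt p1 (2 * j) then 1 else 0) + rk p2 := by
    have hsplit : range n = range (k + 1 + (n - 1 - k)) := congrArg range (by omega)
    rw [hp.rk_eq_sum_range, hsplit, sum_range_add, sum_range_succ, h2, hp2.rk_eq_sum_range]
    simp only [Bool.false_eq_true, if_false, add_zero]
    congr 1
    · exact sum_congr rfl fun j hj => by rw [h1 (2 * j) (by simp at hj; omega)]
    · exact sum_congr rfl fun t ht => by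
        rw [show 2 * (k + 1 + t) + 1 = 2 * k + 2 + (2 * t + 1) by ring,
          h3 (2 * t + 1) (by simp at ht; omega)]
  omega

/-- If a Dyck path `p` of order `n` decomposes at its first return as
`p = p1^+ p2` with `p1` of order `k` (here `p1plus = p1^+` is `p1` with an up
step prepended and a down step appended), then `rk(p1^+) = k - rk(p1)` and
hence `rk(p) = k - rk(p1) + rk(p2)`. -/
theorem rank_first_return (n k : ℕ) (hn : 1 ≤ n) (hk : k ≤ n - 1)
    (p : Fin (2 * n) → Bool) (p1 : Fin (2 * k) → Bool)
    (p1plus : Fin (2 * (k + 1)) → Bool)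
    (p2 : Fin (2 * (n - 1 - k)) → Bool)
    (hp : IsDyck n p) (hp1 : IsDyck k p1) (hp1plus : IsDyck (k + 1) p1plus)
    (hp2 : IsDyck (n - 1 - k) p2)
    (h0 : stepAt p 0 = true)
    (h1 : ∀ i < 2 * k, stepAt p (i + 1) = stepAt p1 i)
    (h2 : stepAt p (2 * k + 1) = false)
    (h3 : ∀ i < 2 * (n - 1 - k), stepAt p (2 * k + 2 + i) = stepAt p2 i)
    (g0 : stepAt p1plus 0 = true)
    (g1 : ∀ i < 2 * k, stepAt p1plus (i + 1) = stepAt p1 i)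
    (g2 : stepAt p1plus (2 * k + 1) = false) :
    rk p1plus = k - rk p1 ∧ rk p = k - rk p1 + rk p2 :=
  rank_first_return_general n k hn hk p p1 p1plus p2 hp hp1 hp2 h1 h2 h3 g1
end

section
/- For every Dyck path p of order n, area(p) ≥ rk(p). -/
open Finset

/-!
At an odd position `j` the height `#up - #down` has the parity of `j`, so it is odd, and it
is nonnegative on a Dyck path; hence it is at least `1`. If step `j` goes up, the height at
the even position `j + 1` is at least `2`, so the column over `j + 1` contributes at least
one unit to the area. Each up step counted by `rk` thus owns its own unit of area.
-/

section StepCount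

variable {m : ℕ} (p : Fin m → Bool)

def stepCount (b : Bool) (k : ℕ) : ℕ :=
  ((range k).filter fun j => stepAt p j = b).card

lemma card_filter_lt_eq_stepCount (b : Bool) {k : ℕ} (hk : k ≤ m) :
    (univ.filter fun i : Fin m => (i : ℕ) < k ∧ p i = b).card = stepCount p b k := by
  refine card_nbij (↑) (fun i hi => ?_) (fun _ _ _ _ h => Fin.ext h) (fun j hj => ?_)
  · obtain ⟨hik, hib⟩ := (mem_filter.mp (mem_coe.mp hi)).2
    exact mem_filter.mpr ⟨mem_range.mpr hik, by simp [stepAt, hib]⟩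
  · have hj' : j < k ∧ stepAt p j = b := by simpa using hj
    have hjm : j < m := hj'.1.trans_le hk
    exact ⟨⟨j, hjm⟩, by simpa [stepAt, hjm] using hj', rfl⟩

lemma upCount_eq_stepCount {k : ℕ} (hk : k ≤ m) : upCount p k = stepCount p true k :=
  card_filter_lt_eq_stepCount p true hk

lemma downCount_eq_stepCount {k : ℕ} (hk : k ≤ m) : downCount p k = stepCount p false k :=
  card_filter_lt_eq_stepCount p false hk

lemma stepCount_succ (b : Bool) (k : ℕ) :
    stepCount p b (k + 1) = stepCount p b k + if stepAt p k = b then 1 else 0 := by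
  unfold stepCount
  rw [range_add_one, filter_insert]
  split <;> simp [card_insert_of_notMem]

lemma stepCount_true_add_stepCount_false (k : ℕ) :
    stepCount p true k + stepCount p false k = k := by
  simpa [stepCount] using card_filter_add_card_filter_not (s := range k) (stepAt p · = true)

end StepCount

lemma two_le_height_succ_of_odd {n j : ℕ} (p : Fin (2 * n) → Bool) (hj : Odd j) (hjn : j < 2 * n)
    (hballot : downCount p j ≤ upCount p j) (hup : stepAt p j = true) :
    2 ≤ height p (j + 1) := by
  rw [upCount_eq_stepCount p hjn.le, downCount_eq_stepCount p hjn.le] at hballot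
  have hlen := stepCount_true_add_stepCount_false p j
  have hupSucc : stepCount p true (j + 1) = stepCount p true j + 1 := by
    simp [stepCount_succ, hup]
  have hdownSucc : stepCount p false (j + 1) = stepCount p false j := by
    simp [stepCount_succ, hup]
  rw [height, upCount_eq_stepCount p (k := j + 1) hjn, downCount_eq_stepCount p (k := j + 1) hjn]
  obtain ⟨r, rfl⟩ := hj
  omega

lemma sum_comp_two_mul_le_sum_range {n : ℕ} (f : ℕ → ℕ) {s : Finset ℕ} (hs : s ⊆ range (n + 1)) :
    ∑ i ∈ s, f (2 * i) ≤ ∑ k ∈ range (2 * n + 1), f k := by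
  rw [← sum_image (g := (2 * ·)) (fun a _ b _ h => by simpa using h)]
  refine sum_le_sum_of_subset fun k hk => ?_
  obtain ⟨i, hi, rfl⟩ := mem_image.mp hk
  have := mem_range.mp (hs hi)
  exact mem_range.mpr (by omega)

/-- For every Dyck path `p` of order `n`, `area(p) ≥ rk(p)`. -/
theorem rank_le_area (n : ℕ) (p : Fin (2 * n) → Bool) (hp : IsDyck n p) :
    rk p ≤ area p := by
  set S := (Icc 1 (n - 1)).filter fun i => stepAt p (2 * i - 1) = true
  have hS : S ⊆ range (n + 1) := fun i hi => by
    have := mem_Icc.mp (mem_filter.mp hi).1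
    exact mem_range.mpr (by omega)
  have hunit : ∀ i ∈ S, 1 ≤ height p (2 * i) / 2 := by
    intro i hi
    obtain ⟨hi, hup⟩ := mem_filter.mp hi
    obtain ⟨hi1, hin⟩ := mem_Icc.mp hi
    have h := two_le_height_succ_of_odd p ⟨i - 1, by omega⟩ (by omega) (hp.2 _ (by omega)) hup
    rw [Nat.sub_add_cancel (by omega)] at h
    omega
  calc rk p = S.card • 1 := by simp [rk, S]
    _ ≤ ∑ i ∈ S, height p (2 * i) / 2 := card_nsmul_le_sum _ _ _ hunit
    _ ≤ area p := sum_comp_two_mul_le_sum_range (height p · / 2) hS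
end

section
/- The rank generating function of the noncrossing partition lattice satisfies NC(n;t) = sum over π in NC(n) of t^(rk(π)) = sum over j with 0 ≤ 2j ≤ n-1 of C_j * binomial(n-1, 2j) * t^j * (1+t)^(n-1-2j), where C_j is the j-th Catalan number. -/
/-!
Write `f s` for the rank generating function of the noncrossing partitions of a finite chain `s`
with least element `a`. If `b` is the largest element of the block of `a`, noncrossingness forces
every other block to lie entirely below `b` or entirely above it. For `a < b`, removing `a` from
its block turns these partitions into pairs of noncrossing partitions of `s ∩ (a, b]` and
`s ∩ (b, ∞)`, of total rank one less; for `b = a` they are the noncrossing partitions of `s \ {a}`.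
Hence `f ({a} ∪ u) = f u + t ∑_{b ∈ u} f (u ∩ (-∞, b]) f (u ∩ (b, ∞))`, and `f s` depends only on
`|s|`. The polynomials `γ m = ∑_j C_j (m choose 2j) t^j (1+t)^(m-2j)` obey the matching recurrence
`γ (m+1) = (1+t) γ m + t ∑_{i<m} γ i γ (m-1-i)`, by Pascal's rule, the identity
`∑_{i<m} (i choose p) (m-1-i choose q) = (m choose p+q+1)` and Catalan's recurrence; so
`f s = γ (|s| - 1)`.
-/

open Finset

/-- Two blocks `B`, `B'` cross if there are `a < a' < b < b'` with `a, b ∈ B`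
and `a', b' ∈ B'`.  A partition is noncrossing if no two distinct blocks
cross. -/
def Noncrossing {n : ℕ} (P : Finpartition (Finset.univ : Finset (Fin n))) : Prop :=
  ∀ B ∈ P.parts, ∀ B' ∈ P.parts, B ≠ B' →
    ¬ ∃ a a' b b' : Fin n, a ∈ B ∧ b ∈ B ∧ a' ∈ B' ∧ b' ∈ B' ∧
      a < a' ∧ a' < b ∧ b < b'

variable {α : Type*}

namespace Finset

def Crosses [LT α] (B C : Finset α) : Prop :=
  ∃ a a' b b' : α, a ∈ B ∧ b ∈ B ∧ a' ∈ C ∧ b' ∈ C ∧ a < a' ∧ a' < b ∧ b < b'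

theorem Crosses.mono [LT α] {B C B' C' : Finset α} (h : B.Crosses C) (hB : B ⊆ B')
    (hC : C ⊆ C') : B'.Crosses C' := by
  obtain ⟨x, x', y, y', hx, hy, hx', hy', h⟩ := h
  exact ⟨x, x', y, y', hB hx, hB hy, hC hx', hC hy', h⟩

section Preorder

variable [Preorder α] [DecidableEq α] {B C : Finset α} {a b : α}

theorem Crosses.of_insert_right (h : B.Crosses (insert a C)) (ha : ∀ x ∈ B, a < x) :
    B.Crosses C := by
  obtain ⟨x, x', y, y', hx, hy, hx', hy', h1, h2, h3⟩ := h
  have hax : a < x := ha x hx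
  exact ⟨x, x', y, y', hx, hy, (mem_insert.1 hx').resolve_left (hax.trans h1).ne',
    (mem_insert.1 hy').resolve_left (hax.trans (h1.trans (h2.trans h3))).ne', h1, h2, h3⟩

theorem Crosses.of_insert_left (h : (insert a B).Crosses C) (ha : ∀ x ∈ C, a < x) (hb : b ∈ B)
    (hbC : ∀ x ∈ C, x < b) : B.Crosses C ∨ C.Crosses B := by
  obtain ⟨x, x', y, y', hx, hy, hx', hy', h1, h2, h3⟩ := h
  have hyB : y ∈ B := (mem_insert.1 hy).resolve_left ((ha x' hx').trans h2).ne'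
  rcases mem_insert.1 hx with rfl | hxB
  · exact .inr ⟨x', y, y', b, hx', hy', hyB, hb, h2, h3, hbC y' hy'⟩
  · exact .inl ⟨x, x', y, y', hxB, hyB, hx', hy', h1, h2, h3⟩

end Preorder

theorem sum_card_filter_lt {M : Type*} [LinearOrder α] [AddCommMonoid M] (u : Finset α)
    (f : ℕ → M) : ∑ b ∈ u, f #(u.filter (· < b)) = ∑ i ∈ range #u, f i := by
  induction u using Finset.induction_on_max with
  | empty => simp
  | insert m u hm ih =>
    have hmu : m ∉ u := fun h => lt_irrefl m (hm m h)
    rw [sum_insert hmu, card_insert_of_notMem hmu, sum_range_succ, filter_insert,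
      if_neg (lt_irrefl m), filter_true_of_mem hm, add_comm, ← ih]
    congr 1
    refine sum_congr rfl fun b hb => ?_
    rw [filter_insert, if_neg (not_lt.2 (hm b hb).le)]

theorem card_filter_le_eq_card_filter_lt_add_one [LinearOrder α] {u : Finset α} {b : α}
    (hb : b ∈ u) : #(u.filter (· ≤ b)) = #(u.filter (· < b)) + 1 := by
  have : u.filter (· ≤ b) = insert b (u.filter (· < b)) := by
    ext x
    simp only [mem_filter, mem_insert, le_iff_lt_or_eq]
    aesop
  rw [this, card_insert_of_notMem (by simp)]

end Finset

namespace Nat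

theorem sum_range_choose_mul_choose (m p q : ℕ) :
    ∑ i ∈ range m, i.choose p * (m - 1 - i).choose q = m.choose (p + q + 1) := by
  induction m generalizing q with
  | zero => simp
  | succ m ih =>
    rw [sum_range_succ, add_tsub_cancel_right, Nat.sub_self]
    cases q with
    | zero =>
      have h := ih 0
      simp only [choose_zero_right, mul_one, add_zero] at h ⊢
      rw [h, choose_succ_succ' m, add_comm]
    | succ q =>
      have h : ∀ i ∈ range m, i.choose p * (m - i).choose (q + 1)
          = i.choose p * (m - 1 - i).choose q + i.choose p * (m - 1 - i).choose (q + 1) := by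
        intro i hi
        rw [show m - i = m - 1 - i + 1 by have := mem_range.1 hi; omega, choose_succ_succ, mul_add]
      rw [sum_congr rfl h, sum_add_distrib, ih, ih, choose_zero_succ, mul_zero, add_zero,
        ← add_assoc, add_right_comm, ← choose_succ_succ]

end Nat

namespace Finpartition

section Operations

variable [DecidableEq α] {s t u : Finset α}

def rank (P : Finpartition s) : ℕ := #s - #P.parts

theorem ext_part {P Q : Finpartition s} (h : ∀ x ∈ s, P.part x = Q.part x) : P = Q := by
  suffices ∀ {P Q : Finpartition s}, (∀ x ∈ s, P.part x = Q.part x) → P.parts ⊆ Q.parts from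
    Finpartition.ext ((this h).antisymm (this fun x hx => (h x hx).symm))
  intro P Q h B hB
  obtain ⟨x, hx⟩ := P.nonempty_of_mem_parts hB
  rw [← P.part_eq_of_mem hB hx, h x (P.le hB hx)]
  exact Q.part_mem.2 (P.le hB hx)

theorem part_eq_self_of_subsingleton (P : Finpartition s) (hs : (s : Set α).Subsingleton)
    {x : α} (hx : x ∈ s) : P.part x = s :=
  (P.part_subset x).antisymm fun _ hy => hs hx hy ▸ P.mem_part hx

theorem eq_bot_of_subsingleton (P : Finpartition s) (hs : (s : Set α).Subsingleton) : P = ⊥ :=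
  ext_part fun x hx => by
    rw [P.part_eq_self_of_subsingleton hs hx,
      (⊥ : Finpartition s).part_eq_self_of_subsingleton hs hx]

@[simp] theorem rank_bot : (⊥ : Finpartition s).rank = 0 := by
  rw [rank, card_bot, Nat.sub_self]

theorem mem_restrict_parts (P : Finpartition s) (h : t ⊆ s) {C : Finset α} :
    C ∈ (P.restrict h).parts ↔ C ≠ ∅ ∧ ∃ B ∈ P.parts, B ∩ t = C := by
  simp [restrict]

theorem part_restrict (P : Finpartition s) (h : t ⊆ s) {x : α} (hx : x ∈ t) :
    (P.restrict h).part x = P.part x ∩ t := by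
  have hxP : x ∈ P.part x ∩ t := mem_inter.2 ⟨P.mem_part (h hx), hx⟩
  exact part_eq_of_mem _ ((P.mem_restrict_parts h).2
    ⟨ne_empty_of_mem hxP, P.part x, P.part_mem.2 (h hx), rfl⟩) hxP

def disjUnion (P : Finpartition s) (Q : Finpartition t) (hst : Disjoint s t) (hu : s ∪ t = u) :
    Finpartition u where
  parts := P.parts ∪ Q.parts
  supIndep := by
    rw [supIndep_iff_pairwiseDisjoint, coe_union]
    exact P.disjoint.union Q.disjoint fun B hB C hC _ => hst.mono (P.le hB) (Q.le hC)
  sup_parts := by rw [sup_union, P.sup_parts, Q.sup_parts, ← hu]; rfl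
  bot_notMem := by simp

section DisjUnion

variable {P : Finpartition s} {Q : Finpartition t} {hst : Disjoint s t} {hu : s ∪ t = u}

theorem part_disjUnion_left {x : α} (hx : x ∈ s) : (P.disjUnion Q hst hu).part x = P.part x :=
  part_eq_of_mem _ (mem_union_left _ (P.part_mem.2 hx)) (P.mem_part hx)

theorem part_disjUnion_right {x : α} (hx : x ∈ t) : (P.disjUnion Q hst hu).part x = Q.part x :=
  part_eq_of_mem _ (mem_union_right _ (Q.part_mem.2 hx)) (Q.mem_part hx)

theorem rank_disjUnion : (P.disjUnion Q hst hu).rank = P.rank + Q.rank := by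
  have hparts : Disjoint P.parts Q.parts := disjoint_left.2 fun B hB hB' => by
    obtain ⟨x, hx⟩ := P.nonempty_of_mem_parts hB
    exact disjoint_left.1 hst (P.le hB hx) (Q.le hB' hx)
  have := P.card_parts_le_card
  have := Q.card_parts_le_card
  simp only [rank, disjUnion, card_union_of_disjoint hparts, ← hu, card_union_of_disjoint hst]
  omega

theorem restrict_disjUnion_left (h : s ⊆ u) : (P.disjUnion Q hst hu).restrict h = P :=
  ext_part fun x hx => by
    rw [part_restrict _ _ hx, part_disjUnion_left hx, inter_eq_left.2 (P.part_subset x)]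

theorem restrict_disjUnion_right (h : t ⊆ u) : (P.disjUnion Q hst hu).restrict h = Q :=
  ext_part fun x hx => by
    rw [part_restrict _ _ hx, part_disjUnion_right hx, inter_eq_left.2 (Q.part_subset x)]

theorem disjUnion_restrict (P : Finpartition u) (hs : s ⊆ u) (ht : t ⊆ u)
    (hP : ∀ B ∈ P.parts, B ⊆ s ∨ B ⊆ t) :
    (P.restrict hs).disjUnion (P.restrict ht) hst hu = P := by
  refine ext_part fun x hx => ?_
  have hxP := P.mem_part hx
  rcases mem_union.1 (hu ▸ hx) with hxs | hxt
  · rw [part_disjUnion_left hxs, part_restrict _ _ hxs, inter_eq_left]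
    exact (hP _ (P.part_mem.2 hx)).resolve_right fun h => disjoint_left.1 hst hxs (h hxP)
  · rw [part_disjUnion_right hxt, part_restrict _ _ hxt, inter_eq_left]
    exact (hP _ (P.part_mem.2 hx)).resolve_left fun h => disjoint_left.1 hst (h hxP) hxt

end DisjUnion

def addToPart (Q : Finpartition t) {a : α} (ha : a ∉ t) {b : α} (hb : b ∈ t)
    (hu : insert a t = u) : Finpartition u where
  parts := insert (insert a (Q.part b)) (Q.parts.erase (Q.part b))
  supIndep := by
    rw [supIndep_iff_pairwiseDisjoint, coe_insert]
    refine (Q.disjoint.subset (coe_subset.2 (erase_subset _ _))).insert fun C hC _ => ?_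
    rw [mem_coe, mem_erase] at hC
    exact disjoint_insert_left.2
      ⟨fun haC => ha (Q.le hC.2 haC), Q.disjoint (Q.part_mem.2 hb) hC.2 (Ne.symm hC.1)⟩
  sup_parts := by
    conv_rhs => rw [← hu, ← Q.sup_parts, ← insert_erase (Q.part_mem.2 hb), sup_insert]
    rw [sup_insert]
    simp only [id, sup_eq_union, insert_union]
  bot_notMem := by
    rw [bot_eq_empty, mem_insert, not_or]
    exact ⟨(insert_ne_empty _ _).symm, fun h => Q.bot_notMem (mem_of_mem_erase h)⟩

section AddToPart

variable {Q : Finpartition t} {a b : α} {ha : a ∉ t} {hb : b ∈ t} {hu : insert a t = u}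

theorem part_addToPart_of_mem {x : α} (hx : x ∈ insert a (Q.part b)) :
    (Q.addToPart ha hb hu).part x = insert a (Q.part b) :=
  part_eq_of_mem _ (mem_insert_self _ _) hx

theorem part_addToPart_of_notMem {x : α} (hx : x ∈ t) (hxb : x ∉ Q.part b) :
    (Q.addToPart ha hb hu).part x = Q.part x := by
  refine part_eq_of_mem _ (mem_insert_of_mem (mem_erase.2 ⟨fun h => ?_, Q.part_mem.2 hx⟩))
    (Q.mem_part hx)
  exact hxb (h ▸ Q.mem_part hx)

theorem rank_addToPart : (Q.addToPart ha hb hu).rank = Q.rank + 1 := by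
  have hnew : insert a (Q.part b) ∉ Q.parts.erase (Q.part b) := fun h =>
    ha (Q.le (mem_of_mem_erase h) (mem_insert_self _ _))
  have := card_erase_add_one (Q.part_mem.2 hb)
  have := Q.card_parts_le_card
  simp only [rank, addToPart, card_insert_of_notMem hnew, ← hu, card_insert_of_notMem ha]
  omega

theorem restrict_addToPart (h : t ⊆ u) : (Q.addToPart ha hb hu).restrict h = Q := by
  refine ext_part fun x hx => ?_
  rw [part_restrict _ _ hx]
  by_cases hxb : x ∈ Q.part b
  · rw [part_addToPart_of_mem (mem_insert_of_mem hxb), insert_inter_of_notMem ha,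
      inter_eq_left.2 (Q.part_subset b), Q.part_eq_of_mem (Q.part_mem.2 hb) hxb]
  · rw [part_addToPart_of_notMem hx hxb, inter_eq_left.2 (Q.part_subset x)]

theorem addToPart_restrict (P : Finpartition u) (h : t ⊆ u) (hab : b ∈ P.part a) :
    (P.restrict h).addToPart ha hb hu = P := by
  have hau : a ∈ u := P.part_nonempty.1 ⟨b, hab⟩
  have hblock : insert a ((P.restrict h).part b) = P.part a := by
    rw [part_restrict _ _ hb, P.part_eq_of_mem (P.part_mem.2 hau) hab]
    refine (insert_subset (P.mem_part hau) inter_subset_left).antisymm fun y hy => ?_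
    rcases mem_insert.1 (hu ▸ P.part_subset a hy) with rfl | hyt
    · exact mem_insert_self _ _
    · exact mem_insert_of_mem (mem_inter.2 ⟨hy, hyt⟩)
  refine ext_part fun x hx => ?_
  by_cases hx' : x ∈ insert a ((P.restrict h).part b)
  · have hxa : x ∈ P.part a := hblock ▸ hx'
    rw [part_addToPart_of_mem hx', hblock, P.part_eq_of_mem (P.part_mem.2 hau) hxa]
  · have hxt : x ∈ t :=
      (mem_insert.1 (hu ▸ hx)).resolve_left fun hxa => hx' (hxa ▸ mem_insert_self _ _)
    rw [part_addToPart_of_notMem hxt fun h => hx' (mem_insert_of_mem h), part_restrict _ _ hxt,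
      inter_eq_left]
    intro y hy
    refine (mem_insert.1 (hu ▸ P.part_subset x hy)).resolve_left fun hya => hx' ?_
    rw [hblock, P.part_eq_of_mem (P.part_mem.2 hx) (hya ▸ hy)]
    exact P.mem_part hx

end AddToPart

def IsNoncrossing [LT α] (P : Finpartition s) : Prop :=
  ∀ B ∈ P.parts, ∀ C ∈ P.parts, B ≠ C → ¬ B.Crosses C

theorem IsNoncrossing.restrict [LT α] {P : Finpartition s} (hP : P.IsNoncrossing) (h : t ⊆ s) :
    (P.restrict h).IsNoncrossing := by
  intro B hB C hC hne hBC
  obtain ⟨-, B', hB', rfl⟩ := (P.mem_restrict_parts h).1 hB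
  obtain ⟨-, C', hC', rfl⟩ := (P.mem_restrict_parts h).1 hC
  exact hP B' hB' C' hC' (by rintro rfl; exact hne rfl)
    (hBC.mono inter_subset_left inter_subset_left)

end Operations

section Noncrossing

variable [PartialOrder α] [DecidableEq α] {s t u : Finset α}

theorem isNoncrossing_bot : (⊥ : Finpartition s).IsNoncrossing := by
  intro B hB C _ _ ⟨x, _, y, _, hx, hy, _, _, h1, h2, _⟩
  obtain ⟨z, -, rfl⟩ := mem_bot_iff.1 hB
  rw [mem_singleton] at hx hy
  exact (h1.trans h2).ne (hx.trans hy.symm)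

theorem IsNoncrossing.disjUnion {P : Finpartition s} {Q : Finpartition t} (hP : P.IsNoncrossing)
    (hQ : Q.IsNoncrossing) (hlt : ∀ x ∈ s, ∀ y ∈ t, x < y) {hst : Disjoint s t}
    {hu : s ∪ t = u} : (P.disjUnion Q hst hu).IsNoncrossing := by
  intro B hB C hC hne ⟨x, x', y, y', hx, hy, hx', hy', h1, h2, h3⟩
  rcases mem_union.1 hB with hB | hB <;> rcases mem_union.1 hC with hC | hC
  · exact hP B hB C hC hne ⟨x, x', y, y', hx, hy, hx', hy', h1, h2, h3⟩
  · exact lt_asymm h2 (hlt y (P.le hB hy) x' (Q.le hC hx'))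
  · exact lt_asymm h1 (hlt x' (P.le hC hx') x (Q.le hB hx))
  · exact hQ B hB C hC hne ⟨x, x', y, y', hx, hy, hx', hy', h1, h2, h3⟩

theorem IsNoncrossing.addToPart {Q : Finpartition t} (hQ : Q.IsNoncrossing) {a b : α}
    {ha : a ∉ t} {hb : b ∈ t} {hu : insert a t = u} (hmin : ∀ x ∈ t, a < x)
    (hmax : ∀ x ∈ t, x ≤ b) : (Q.addToPart ha hb hu).IsNoncrossing := by
  have hQb := Q.part_mem.2 hb
  have hbounds : ∀ C ∈ Q.parts.erase (Q.part b), (∀ x ∈ C, a < x) ∧ ∀ x ∈ C, x < b := by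
    intro C hC
    refine ⟨fun x hx => hmin x (Q.le (mem_of_mem_erase hC) hx), fun x hx => ?_⟩
    refine (hmax x (Q.le (mem_of_mem_erase hC) hx)).lt_of_ne fun hxb => ne_of_mem_erase hC ?_
    exact (Q.part_eq_of_mem (mem_of_mem_erase hC) (hxb ▸ hx)).symm
  intro B hB C hC hne hBC
  simp only [Finpartition.addToPart, mem_insert] at hB hC
  rcases hB with rfl | hB <;> rcases hC with rfl | hC
  · exact hne rfl
  · have hCb := ne_of_mem_erase hC
    rcases hBC.of_insert_left (hbounds C hC).1 (Q.mem_part hb) (hbounds C hC).2 with h | h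
    · exact hQ _ hQb _ (mem_of_mem_erase hC) hCb.symm h
    · exact hQ _ (mem_of_mem_erase hC) _ hQb hCb h
  · exact hQ _ (mem_of_mem_erase hB) _ hQb (ne_of_mem_erase hB)
      (hBC.of_insert_right (hbounds B hB).1)
  · exact hQ _ (mem_of_mem_erase hB) _ (mem_of_mem_erase hC) hne hBC

end Noncrossing

section LinearOrder

variable [LinearOrder α] {s : Finset α} {P : Finpartition s} {a b : α}

theorem IsNoncrossing.forall_le_or_forall_lt (hP : P.IsNoncrossing) (hmin : ∀ x ∈ s, a ≤ x)
    (hab : b ∈ P.part a) (hmax : ∀ x ∈ P.part a, x ≤ b) {B : Finset α} (hB : B ∈ P.parts) :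
    (∀ x ∈ B, x ≤ b) ∨ ∀ x ∈ B, b < x := by
  have has : a ∈ s := P.part_nonempty.1 ⟨b, hab⟩
  have hPa := P.part_mem.2 has
  by_cases hBa : B = P.part a
  · exact .inl (hBa ▸ hmax)
  by_contra! h
  obtain ⟨⟨x, hxB, hbx⟩, y, hyB, hyb⟩ := h
  have hay : a ≠ y := fun h => hBa (P.eq_of_mem_parts hB hPa (h ▸ hyB) (P.mem_part has))
  have hyb' : y ≠ b := fun h => hBa (P.eq_of_mem_parts hB hPa (h ▸ hyB) hab)
  exact hP _ hPa B hB (Ne.symm hBa) ⟨a, y, b, x, P.mem_part has, hab, hyB, hxB,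
    (hmin y (P.le hB hyB)).lt_of_ne hay, hyb.lt_of_ne hyb', hbx⟩

theorem IsNoncrossing.disjUnion_restrict_filter (hP : P.IsNoncrossing) (hmin : ∀ x ∈ s, a ≤ x)
    (hab : b ∈ P.part a) (hmax : ∀ x ∈ P.part a, x ≤ b)
    {hst : Disjoint (s.filter (· ≤ b)) (s.filter (b < ·))}
    {hu : s.filter (· ≤ b) ∪ s.filter (b < ·) = s} :
    (P.restrict (filter_subset _ s)).disjUnion (P.restrict (filter_subset _ s)) hst hu = P := by
  refine disjUnion_restrict P _ _ fun B hB => ?_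
  rcases hP.forall_le_or_forall_lt hmin hab hmax hB with h | h
  · exact .inl fun x hx => mem_filter.2 ⟨P.le hB hx, h x hx⟩
  · exact .inr fun x hx => mem_filter.2 ⟨P.le hB hx, h x hx⟩

end LinearOrder

end Finpartition

section Gamma

variable {R : Type*} [CommSemiring R]

theorem sum_range_catalan_mul_catalan (N : ℕ) (W : ℕ → R) (hW : ∀ j, N ≤ j → W j = 0) :
    ∑ c ∈ range N, ∑ d ∈ range N, (catalan c : R) * catalan d * W (c + d) =
      ∑ j ∈ range N, (catalan (j + 1) : R) * W j := by
  have hcat (j : ℕ) : (catalan (j + 1) : R) * W j =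
      ∑ c ∈ Ico 0 (j + 1), (catalan c : R) * catalan (j - c) * W j := by
    rw [catalan_succ, Fin.sum_univ_eq_sum_range (fun c => catalan c * catalan (j - c)),
      Nat.cast_sum, sum_mul, range_eq_Ico]
    push_cast
    rfl
  simp_rw [hcat, range_eq_Ico, ← sum_Ico_Ico_comm]
  refine sum_congr rfl fun c hc => ?_
  rw [sum_Ico_eq_sum_range _ c N, ← range_eq_Ico,
    ← sum_range_add_sum_Ico _ (show N - c ≤ N by omega),
    sum_eq_zero (s := Ico (N - c) N), add_zero]
  · simp
  · intro d hd
    rw [hW _ (by simp at hd hc; omega), mul_zero]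

def gammaTerm (m j : ℕ) (t : R) : R :=
  catalan j * m.choose (2 * j) * t ^ j * (1 + t) ^ (m - 2 * j)

def gammaPoly (m : ℕ) (t : R) : R :=
  ∑ j ∈ range (m + 1), gammaTerm m j t

@[simp] theorem gammaPoly_zero (t : R) : gammaPoly 0 t = 1 := by simp [gammaPoly, gammaTerm]

theorem gammaTerm_eq_zero {m j : ℕ} (h : m < 2 * j) (t : R) : gammaTerm m j t = 0 := by
  simp [gammaTerm, Nat.choose_eq_zero_of_lt h]

theorem gammaPoly_eq_sum_range {m N : ℕ} (h : m < N) (t : R) :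
    gammaPoly m t = ∑ j ∈ range N, gammaTerm m j t :=
  sum_subset (range_subset_range.2 h) fun j _ hj => gammaTerm_eq_zero (by simp at hj; omega) t

theorem gammaTerm_mul_gammaTerm (a b c d : ℕ) (t : R) :
    gammaTerm a c t * gammaTerm b d t = catalan c * catalan d *
      ((a.choose (2 * c) * b.choose (2 * d) : ℕ) * t ^ (c + d) *
        (1 + t) ^ (a + b - 2 * (c + d))) := by
  by_cases h : 2 * c ≤ a ∧ 2 * d ≤ b
  · rw [gammaTerm, gammaTerm, show a + b - 2 * (c + d) = (a - 2 * c) + (b - 2 * d) by omega]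
    push_cast
    ring
  · rcases not_and_or.1 h with h | h <;> simp [gammaTerm, Nat.choose_eq_zero_of_lt (not_le.1 h)]

theorem gammaPoly_succ_eq_add (m : ℕ) (t : R) :
    gammaPoly (m + 1) t = (1 + t) * gammaPoly m t +
      ∑ j ∈ range m, (catalan (j + 1) : R) * m.choose (2 * j + 1) * t ^ (j + 1) *
        (1 + t) ^ (m - 1 - 2 * j) := by
  rw [gammaPoly, gammaPoly_eq_sum_range (show m < m + 2 by omega), mul_sum,
    sum_range_succ' _ (m + 1), sum_range_succ' _ (m + 1), sum_range_succ _ m, sum_range_succ _ m,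
    gammaTerm_eq_zero (show m + 1 < 2 * (m + 1) by omega),
    gammaTerm_eq_zero (show m < 2 * (m + 1) by omega), mul_zero, add_zero, add_zero,
    add_right_comm _ _ (∑ j ∈ range m, _), ← sum_add_distrib]
  congr 1
  · refine sum_congr rfl fun j _ => ?_
    rw [gammaTerm, gammaTerm, show 2 * (j + 1) = 2 * j + 1 + 1 by ring, Nat.choose_succ_succ,
      show m + 1 - (2 * j + 1 + 1) = m - 1 - 2 * j by omega]
    by_cases h : 2 * j + 1 + 1 ≤ m
    · rw [show m - (2 * j + 1 + 1) = m - 1 - 2 * j - 1 by omega,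
        show m - 1 - 2 * j = m - 1 - 2 * j - 1 + 1 by omega, pow_succ]
      push_cast
      ring
    · rw [Nat.choose_eq_zero_of_lt (not_le.1 h)]
      push_cast
      ring
  · simp [gammaTerm, pow_succ']

theorem sum_range_gammaPoly_mul_gammaPoly (m : ℕ) (t : R) :
    ∑ i ∈ range m, gammaPoly i t * gammaPoly (m - 1 - i) t =
      ∑ j ∈ range m, (catalan (j + 1) : R) * m.choose (2 * j + 1) * t ^ j *
        (1 + t) ^ (m - 1 - 2 * j) := by
  have hpad : ∀ i ∈ range m, gammaPoly i t * gammaPoly (m - 1 - i) t =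
      ∑ c ∈ range m, ∑ d ∈ range m, (catalan c : R) * catalan d *
        ((i.choose (2 * c) * (m - 1 - i).choose (2 * d) : ℕ) * t ^ (c + d) *
          (1 + t) ^ (m - 1 - 2 * (c + d))) := by
    intro i hi
    have him : i < m := mem_range.1 hi
    rw [gammaPoly_eq_sum_range him, gammaPoly_eq_sum_range (show m - 1 - i < m by omega),
      sum_mul_sum]
    refine sum_congr rfl fun c _ => sum_congr rfl fun d _ => ?_
    rw [gammaTerm_mul_gammaTerm, show i + (m - 1 - i) = m - 1 by omega]
  have hsum : ∀ c ∈ range m, ∑ i ∈ range m, ∑ d ∈ range m, (catalan c : R) * catalan d *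
      ((i.choose (2 * c) * (m - 1 - i).choose (2 * d) : ℕ) * t ^ (c + d) *
        (1 + t) ^ (m - 1 - 2 * (c + d))) = ∑ d ∈ range m, (catalan c : R) * catalan d *
      (m.choose (2 * (c + d) + 1) * t ^ (c + d) * (1 + t) ^ (m - 1 - 2 * (c + d))) := by
    intro c _
    rw [sum_comm]
    refine sum_congr rfl fun d _ => ?_
    rw [← mul_sum, ← sum_mul, ← sum_mul, ← Nat.cast_sum, Nat.sum_range_choose_mul_choose, mul_add]
  rw [sum_congr rfl hpad, sum_comm, sum_congr rfl hsum, sum_range_catalan_mul_catalan m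
    (fun j => (m.choose (2 * j + 1) : R) * t ^ j * (1 + t) ^ (m - 1 - 2 * j))]
  · exact sum_congr rfl fun j _ => by ring
  · intro j hj
    rw [Nat.choose_eq_zero_of_lt (by omega)]
    simp

theorem gammaPoly_succ (m : ℕ) (t : R) :
    gammaPoly (m + 1) t =
      (1 + t) * gammaPoly m t + t * ∑ i ∈ range m, gammaPoly i t * gammaPoly (m - 1 - i) t := by
  rw [gammaPoly_succ_eq_add, sum_range_gammaPoly_mul_gammaPoly, mul_sum]
  congr 1
  exact sum_congr rfl fun j _ => by ring

/-- `gammaPoly_succ` in the indexing produced by `ncRankPoly_insert`: at `i = m - 1` the truncated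
`m - (i + 1) - 1 = 0` supplies the extra `t * gammaPoly (m - 1) t`. -/
theorem gammaPoly_eq_add_sum (m : ℕ) (t : R) :
    gammaPoly m t =
      gammaPoly (m - 1) t + t * ∑ i ∈ range m, gammaPoly i t * gammaPoly (m - (i + 1) - 1) t := by
  rcases m with _ | m
  · simp
  rw [sum_range_succ, Nat.sub_self, Nat.zero_sub, gammaPoly_zero, mul_one, add_tsub_cancel_right,
    gammaPoly_succ]
  have : ∀ i ∈ range m, gammaPoly i t * gammaPoly (m + 1 - (i + 1) - 1) t =
      gammaPoly i t * gammaPoly (m - 1 - i) t := fun i _ => by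
    rw [show m + 1 - (i + 1) - 1 = m - 1 - i by omega]
  rw [sum_congr rfl this]
  ring

end Gamma

section RankPoly

open Finpartition

variable {R : Type*} [LinearOrder α] [CommSemiring R] {s u : Finset α} {a b : α}

open scoped Classical in
noncomputable def ncRankPoly (s : Finset α) (t : R) : R :=
  ∑ P : Finpartition s with P.IsNoncrossing, t ^ P.rank

open scoped Classical in
noncomputable def ncRankPolyJoined (s : Finset α) (a b : α) (t : R) : R :=
  ∑ P : Finpartition s with P.IsNoncrossing ∧ b ∈ P.part a, t ^ P.rank

theorem ncRankPoly_of_subsingleton (hs : (s : Set α).Subsingleton) (t : R) :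
    ncRankPoly s t = 1 := by
  classical
  have : (univ.filter fun P : Finpartition s => P.IsNoncrossing) = {⊥} :=
    eq_singleton_iff_unique_mem.2
      ⟨mem_filter.2 ⟨mem_univ _, isNoncrossing_bot⟩, fun P _ => P.eq_bot_of_subsingleton hs⟩
  rw [ncRankPoly, this, sum_singleton, Finpartition.rank_bot, pow_zero]

theorem ncRankPolyJoined_self (ha : a ∈ s) (t : R) :
    ncRankPolyJoined s a a t = ncRankPoly s t := by
  classical
  rw [ncRankPolyJoined, ncRankPoly]
  exact sum_congr (filter_congr fun P _ => and_iff_left (P.mem_part ha)) fun _ _ => rfl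

theorem ncRankPoly_eq_sum_ncRankPolyJoined (ha : a ∈ s) (hmin : ∀ x ∈ s, a ≤ x) (t : R) :
    ncRankPoly s t = ∑ b ∈ s,
      ncRankPolyJoined (s.filter (· ≤ b)) a b t * ncRankPoly (s.filter (b < ·)) t := by
  classical
  rw [ncRankPoly, ← sum_fiberwise_of_maps_to (t := s)
    (g := fun P : Finpartition s => (P.part a).max' (P.part_nonempty.2 ha))
    fun P _ => P.part_subset a (max'_mem _ _)]
  refine sum_congr rfl fun b hb => ?_
  have haL : a ∈ s.filter (· ≤ b) := mem_filter.2 ⟨ha, hmin b hb⟩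
  have hst : Disjoint (s.filter (· ≤ b)) (s.filter (b < ·)) :=
    disjoint_filter.2 fun _ _ h1 h2 => not_lt.2 h1 h2
  have hu : s.filter (· ≤ b) ∪ s.filter (b < ·) = s := by
    rw [← filter_or]
    exact filter_true_of_mem fun x _ => le_or_gt x b
  rw [ncRankPolyJoined, ncRankPoly, sum_mul_sum, ← sum_product']
  refine sum_nbij' (fun P => (P.restrict (filter_subset _ s), P.restrict (filter_subset _ s)))
    (fun Q => Q.1.disjUnion Q.2 hst hu) ?_ ?_ ?_ ?_ ?_
  all_goals simp only [mem_filter, mem_univ, true_and, max'_eq_iff, mem_product]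
  · rintro P ⟨hP, hab, -⟩
    rw [part_restrict _ _ haL]
    exact ⟨⟨hP.restrict _, mem_inter.2 ⟨hab, mem_filter.2 ⟨hb, le_rfl⟩⟩⟩, hP.restrict _⟩
  · rintro ⟨Q₁, Q₂⟩ ⟨⟨hQ₁, hab⟩, hQ₂⟩
    rw [part_disjUnion_left haL]
    exact ⟨hQ₁.disjUnion hQ₂ fun x hx y hy => (mem_filter.1 hx).2.trans_lt (mem_filter.1 hy).2,
      hab, fun x hx => (mem_filter.1 (Q₁.part_subset a hx)).2⟩
  · rintro P ⟨hP, hab, hmax⟩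
    exact hP.disjUnion_restrict_filter hmin hab hmax
  · rintro ⟨Q₁, Q₂⟩ -
    exact Prod.ext (restrict_disjUnion_left (filter_subset _ s))
      (restrict_disjUnion_right (filter_subset _ s))
  · rintro P ⟨hP, hab, hmax⟩
    conv_lhs => rw [← hP.disjUnion_restrict_filter hmin hab hmax (hst := hst) (hu := hu)]
    rw [rank_disjUnion, pow_add]

theorem ncRankPolyJoined_insert (hmin : ∀ x ∈ u, a < x) (hb : b ∈ u) (hmax : ∀ x ∈ u, x ≤ b)
    (t : R) : ncRankPolyJoined (insert a u) a b t = t * ncRankPoly u t := by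
  classical
  have ha : a ∉ u := fun h => lt_irrefl a (hmin a h)
  have hu : u ⊆ insert a u := subset_insert a u
  rw [ncRankPolyJoined, ncRankPoly, mul_sum]
  refine sum_nbij' (fun P => P.restrict hu) (fun Q => Q.addToPart ha hb rfl) ?_ ?_ ?_ ?_ ?_
  all_goals simp only [mem_filter, mem_univ, true_and]
  · exact fun P hP => hP.1.restrict hu
  · intro Q hQ
    rw [part_addToPart_of_mem (mem_insert_self a _)]
    exact ⟨hQ.addToPart hmin hmax, mem_insert_of_mem (Q.mem_part hb)⟩
  · exact fun P hP => addToPart_restrict P hu hP.2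
  · exact fun Q _ => restrict_addToPart hu
  · intro P hP
    conv_lhs => rw [← addToPart_restrict P hu hP.2 (ha := ha) (hb := hb) (hu := rfl)]
    rw [rank_addToPart, pow_succ']

theorem ncRankPoly_insert (hmin : ∀ x ∈ u, a < x) (t : R) :
    ncRankPoly (insert a u) t = ncRankPoly u t +
      t * ∑ b ∈ u, ncRankPoly (u.filter (· ≤ b)) t * ncRankPoly (u.filter (b < ·)) t := by
  have ha : a ∉ u := fun h => lt_irrefl a (hmin a h)
  rw [ncRankPoly_eq_sum_ncRankPolyJoined (mem_insert_self a u)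
      (forall_mem_insert _ _ _ |>.2 ⟨le_rfl, fun x hx => (hmin x hx).le⟩),
    sum_insert ha, mul_sum]
  congr 1
  · rw [filter_insert, if_pos le_rfl, filter_false_of_mem fun x hx => not_le.2 (hmin x hx),
      insert_empty, filter_insert, if_neg (lt_irrefl a), filter_true_of_mem hmin,
      ncRankPolyJoined_self (mem_singleton_self a), ncRankPoly_of_subsingleton (by simp), one_mul]
  · refine sum_congr rfl fun b hb => ?_
    rw [filter_insert, if_pos (hmin b hb).le, filter_insert, if_neg (not_lt.2 (hmin b hb).le),
      ncRankPolyJoined_insert (u := u.filter (· ≤ b)) (fun x hx => hmin x (mem_filter.1 hx).1)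
        (mem_filter.2 ⟨hb, le_rfl⟩) fun x hx => (mem_filter.1 hx).2, mul_assoc]

/-- For `s = ∅` the truncated `#s - 1 = 0` is harmless: both sides are `1`. -/
theorem ncRankPoly_eq_gammaPoly (s : Finset α) (t : R) :
    ncRankPoly s t = gammaPoly (#s - 1) t := by
  induction s using Finset.strongInduction with
  | H s ih =>
  rcases s.eq_empty_or_nonempty with rfl | hs
  · rw [ncRankPoly_of_subsingleton (by simp), card_empty, gammaPoly_zero]
  obtain ⟨a, u, hmin, rfl⟩ : ∃ a u, (∀ x ∈ u, a < x) ∧ s = insert a u :=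
    ⟨s.min' hs, s.erase (s.min' hs), fun x hx => s.min'_lt_of_mem_erase_min' hs hx,
      (insert_erase (s.min'_mem hs)).symm⟩
  have ha : a ∉ u := fun h => lt_irrefl a (hmin a h)
  have ih' : ∀ v ⊆ u, ncRankPoly v t = gammaPoly (#v - 1) t := fun v hv =>
    ih v (Finset.ssubset_of_subset_of_ssubset hv (ssubset_insert ha))
  have hterm : ∀ b ∈ u, ncRankPoly (u.filter (· ≤ b)) t * ncRankPoly (u.filter (b < ·)) t =
      gammaPoly #(u.filter (· < b)) t * gammaPoly (#u - (#(u.filter (· < b)) + 1) - 1) t := by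
    intro b hb
    have hcard := card_filter_add_card_filter_not (s := u) (· ≤ b)
    simp only [not_le] at hcard
    rw [ih' _ (filter_subset _ _), ih' _ (filter_subset _ _), ← hcard,
      card_filter_le_eq_card_filter_lt_add_one hb, add_tsub_cancel_right, add_tsub_cancel_left]
  rw [ncRankPoly_insert hmin, card_insert_of_notMem ha, add_tsub_cancel_right, ih' u subset_rfl,
    sum_congr rfl hterm,
    sum_card_filter_lt u fun i => gammaPoly i t * gammaPoly (#u - (i + 1) - 1) t,
    ← gammaPoly_eq_add_sum]

end RankPoly

open scoped Classical in
/-- The rank generating function of the noncrossing partition lattice: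
`∑_{π ∈ NC(n)} t^rk(π) = ∑_{0 ≤ 2j ≤ n-1} C_j binomial(n-1,2j) t^j (1+t)^(n-1-2j)`,
where the rank of `π` is `n` minus its number of blocks. -/
theorem nc_rank_gamma (n : ℕ) (hn : 1 ≤ n) (t : ℝ) :
    (∑ π ∈ (Finset.univ.filter fun π :
        Finpartition (Finset.univ : Finset (Fin n)) => Noncrossing π),
      t ^ (n - π.parts.card)) =
      ∑ j ∈ (Finset.range n).filter (fun j => 2 * j ≤ n - 1),
        (catalan j : ℝ) * ((n - 1).choose (2 * j)) * t ^ j *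
          (1 + t) ^ (n - 1 - 2 * j) := by
  have hL : (∑ π ∈ (Finset.univ.filter fun π :
        Finpartition (Finset.univ : Finset (Fin n)) => Noncrossing π),
      t ^ (n - π.parts.card)) = ncRankPoly (univ : Finset (Fin n)) t :=
    sum_congr rfl fun π _ => by rw [Finpartition.rank, card_univ, Fintype.card_fin]
  rw [hL, ncRankPoly_eq_gammaPoly, card_univ, Fintype.card_fin, gammaPoly, Nat.sub_add_cancel hn]
  refine (sum_filter_of_ne fun j _ hj => ?_).symm
  contrapose! hj
  exact gammaTerm_eq_zero (by omega) t
end
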